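/- arXiv:2601.19537 — 5 statements merged into one kernel-verified Lean document; each statement's English description precedes it below -/
import Mathlib

section
/- Let n ≥ 3 and let i, j be integers with 2 ≤ i < j ≤ n, and set z = (i-1, j) ∈ S_n. Then z consecutively contains the pattern 14325 if and only if j = i+1 and {i, i+1} ∩ {2, n} = ∅ (equivalently: j = i+1, i ≥ 3 and i+1 ≤ n-1); and in that case the pattern 14325 consecutively appears in z at position i-2. -/
/-- The longest element `w₀` of the symmetric group on `Fin n`,
sending `t` to `n - 1 - t` (`0`-based), i.e. `t ↦ n + 1 - t` in `1`-based terms. -/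
def w0 (n : ℕ) : Equiv.Perm (Fin n) :=
  ⟨Fin.rev, Fin.rev, fun x => Fin.rev_rev x, fun x => Fin.rev_rev x⟩

/-- The Coxeter length of a permutation: its number of inversions. -/
def len {n : ℕ} (x : Equiv.Perm (Fin n)) : ℕ :=
  (Finset.univ.filter fun ab : Fin n × Fin n => ab.1 < ab.2 ∧ x ab.2 < x ab.1).card

/-- The pattern `p ∈ S_m` consecutively appears in `x ∈ S_n` at (`1`-based) position `i`.
Permutations of `{1, …, N}` are modelled (`0`-based) as permutations of `Fin N`. -/
def consecAppearsAt {m n : ℕ} (p : Equiv.Perm (Fin m)) (x : Equiv.Perm (Fin n)) (i : ℕ) :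
    Prop :=
  ∃ h : 1 ≤ i ∧ i + m ≤ n + 1,
    ∀ a b : Fin m,
      p a < p b ↔
        x ⟨i - 1 + a.val, by have := a.isLt; omega⟩ <
          x ⟨i - 1 + b.val, by have := b.isLt; omega⟩

/-- `x` consecutively contains the pattern `p`. -/
def consecContains {m n : ℕ} (p : Equiv.Perm (Fin m)) (x : Equiv.Perm (Fin n)) : Prop :=
  ∃ i : ℕ, consecAppearsAt p x i

/-- The pattern `2143 ∈ S₄` (`0`-based one-line notation: `1,0,3,2`). -/
def p2143 : Equiv.Perm (Fin 4) := Equiv.swap 0 1 * Equiv.swap 2 3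

/-- The pattern `14325 ∈ S₅` (`0`-based one-line notation: `0,3,2,1,4`). -/
def p14325 : Equiv.Perm (Fin 5) := Equiv.swap 1 3

/-- The pattern `1536247 ∈ S₇` (`0`-based one-line notation: `0,4,2,5,1,3,6`). -/
def p1536247 : Equiv.Perm (Fin 7) := Equiv.swap 1 4 * Equiv.swap 3 5

/-- The pattern `1462537 ∈ S₇` (`0`-based one-line notation: `0,3,5,1,4,2,6`). -/
def p1462537 : Equiv.Perm (Fin 7) := Equiv.swap 1 3 * Equiv.swap 2 5

/-- The pattern `1423 ∈ S₄` (`0`-based one-line notation: `0,3,1,2`). -/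
def p1423 : Equiv.Perm (Fin 4) := Equiv.swap 1 2 * Equiv.swap 1 3

/-- The pattern `2314 ∈ S₄` (`0`-based one-line notation: `1,2,0,3`). -/
def p2314 : Equiv.Perm (Fin 4) := Equiv.swap 0 2 * Equiv.swap 0 1

/-- The simple transposition `s_t = (t, t+1)` (`1`-based) as a permutation of `Fin n`
(junk value `1` if `t` is out of range). -/
def simpleT (n t : ℕ) : Equiv.Perm (Fin n) :=
  if h : 1 ≤ t ∧ t < n then Equiv.swap ⟨t - 1, by omega⟩ ⟨t, h.2⟩ else 1

/-- The product `s_a s_{a-1} ⋯ s_b` of simple transpositions with descending indices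
(the identity if `b > a`). -/
def descProd (n a b : ℕ) : Equiv.Perm (Fin n) :=
  ((List.range (a + 1 - b)).map fun t => simpleT n (a - t)).prod

/-- The product `s_a s_{a+1} ⋯ s_b` of simple transpositions with ascending indices
(the identity if `b < a`). -/
def ascProd (n a b : ℕ) : Equiv.Perm (Fin n) :=
  ((List.range (b + 1 - a)).map fun t => simpleT n (a + t)).prod

/-- `w s_b < w`, i.e. `s_b` is a right descent of `w`: `w(b) > w(b+1)` (`1`-based). -/
def rdes {n : ℕ} (w : Equiv.Perm (Fin n)) (b : ℕ) : Prop :=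
  ∃ h : 1 ≤ b ∧ b < n, w ⟨b, h.2⟩ < w ⟨b - 1, by omega⟩

/-- `w s_b > w`, i.e. `s_b` is a right ascent of `w`: `w(b) < w(b+1)` (`1`-based). -/
def rasc {n : ℕ} (w : Equiv.Perm (Fin n)) (b : ℕ) : Prop :=
  ∃ h : 1 ≤ b ∧ b < n, w ⟨b - 1, by omega⟩ < w ⟨b, h.2⟩

/-- `(W 1, …, W l)` is a strong right Bruhat walk: consecutive entries differ by right
multiplication by a simple transposition. -/
def isWalk {n : ℕ} (l : ℕ) (W : ℕ → Equiv.Perm (Fin n)) : Prop :=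
  ∀ t : ℕ, 1 ≤ t → t + 1 ≤ l → ∃ b : ℕ, 1 ≤ b ∧ b < n ∧ W (t + 1) = W t * simpleT n b

/-- The walk `(W 1, …, W l)` is compatible with the reduced expression
`s_{ι 1} s_{ι 2} ⋯ s_{ι l}`. -/
def compat {n : ℕ} (l : ℕ) (ι : ℕ → ℕ) (W : ℕ → Equiv.Perm (Fin n)) : Prop :=
  ∀ t : ℕ, 1 ≤ t → t ≤ l →
    rdes (W t) (ι t) ∧
    (2 ≤ t → rasc (W t) (ι (t - 1))) ∧
    (t + 1 ≤ l → rasc (W t) (ι (t + 1)))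

/-- Membership in `X_{m,n}^i`: the one-line values at positions `i, i+1, …, i+m-1`
(`1`-based) are increasing. -/
def windowIncr {n : ℕ} (m i : ℕ) (x : Equiv.Perm (Fin n)) : Prop :=
  ∀ a b : Fin n, i - 1 ≤ a.val → a < b → b.val < i - 1 + m → x a < x b

/-- The order-preserving identification of `Fin m` with the window
`{o, o+1, …, o+m-1}` inside `Fin n`. -/
def shiftEquiv (o m n : ℕ) (h : o + m ≤ n) :
    Fin m ≃ {x : Fin n // o ≤ x.val ∧ x.val < o + m} where
  toFun a := ⟨⟨o + a.val, by have := a.isLt; omega⟩, by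
    refine ⟨Nat.le_add_right _ _, ?_⟩
    show o + a.val < o + m
    have := a.isLt; omega⟩
  invFun x := ⟨x.val.val - o, by have := x.prop; omega⟩
  left_inv a := by
    apply Fin.ext
    show o + a.val - o = a.val
    omega
  right_inv x := by
    apply Subtype.ext
    apply Fin.ext
    show o + (x.val.val - o) = x.val.val
    have := x.prop
    omega

/-- The shift `F_{m,n}^i : S_m → S_n`, sending `i+a-1 ↦ i+p(a)-1` (`1`-based) and fixing
all other points. -/
def shiftPerm (m n i : ℕ) (h : i - 1 + m ≤ n) (p : Equiv.Perm (Fin m)) :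
    Equiv.Perm (Fin n) :=
  Equiv.Perm.extendDomain p (shiftEquiv (i - 1) m n h)


lemma swap_cases_aux {n : ℕ} (A B k : ℕ) (hA : A < n) (hB : B < n) (hk : k < n) :
    (k = A ∧ ((Equiv.swap (⟨A, hA⟩ : Fin n) ⟨B, hB⟩) ⟨k, hk⟩).val = B) ∨
    (k = B ∧ ((Equiv.swap (⟨A, hA⟩ : Fin n) ⟨B, hB⟩) ⟨k, hk⟩).val = A) ∨
    (k ≠ A ∧ k ≠ B ∧ ((Equiv.swap (⟨A, hA⟩ : Fin n) ⟨B, hB⟩) ⟨k, hk⟩).val = k) := by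
  rcases eq_or_ne k A with h | h
  · left; subst h; simp
  · rcases eq_or_ne k B with h2 | h2
    · right; left; subst h2; simp
    · right; right
      refine ⟨h, h2, ?_⟩
      rw [Equiv.swap_apply_of_ne_of_ne (by simp [Fin.ext_iff, h]) (by simp [Fin.ext_iff, h2])]

lemma hp14325_val : ∀ c : Fin 5, (p14325 c).val =
    if c.val = 1 then 3 else if c.val = 3 then 1 else c.val := by decide

theorem stmt0 (n i j : ℕ) (hn : 3 ≤ n) (hi : 2 ≤ i) (hij : i < j) (hj : j ≤ n)
    (z : Equiv.Perm (Fin n))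
    (hz : z = Equiv.swap ⟨i - 2, by omega⟩ ⟨j - 1, by omega⟩) :
    (consecContains p14325 z ↔ j = i + 1 ∧ 3 ≤ i ∧ i + 1 ≤ n - 1) ∧
    (j = i + 1 ∧ 3 ≤ i ∧ i + 1 ≤ n - 1 → consecAppearsAt p14325 z (i - 2)) := by
  subst hz
  have key : j = i + 1 ∧ 3 ≤ i ∧ i + 1 ≤ n - 1 →
      consecAppearsAt p14325
        (Equiv.swap (⟨i - 2, by omega⟩ : Fin n) ⟨j - 1, by omega⟩) (i - 2) := by
    rintro ⟨hj1, hi3, hn1⟩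
    subst hj1
    refine ⟨⟨by omega, by omega⟩, ?_⟩
    have keyv : ∀ c : Fin 5,
        ((Equiv.swap (⟨i - 2, by omega⟩ : Fin n) ⟨i + 1 - 1, by omega⟩)
          ⟨i - 2 - 1 + c.val, by have := c.isLt; omega⟩).val = i - 3 + (p14325 c).val := by
      intro c
      have h1 := hp14325_val c
      have h2 := c.isLt
      have h3 := swap_cases_aux (n := n) (i - 2) (i + 1 - 1) (i - 2 - 1 + c.val)
        (by omega) (by omega) (by omega)
      split_ifs at h1 <;> omega
    intro a b
    rw [Fin.lt_def, Fin.lt_def, keyv a, keyv b]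
    have := hp14325_val a; have := hp14325_val b
    have := a.isLt; have := b.isLt
    split_ifs at * <;> omega
  have fwd : consecContains p14325
      (Equiv.swap (⟨i - 2, by omega⟩ : Fin n) ⟨j - 1, by omega⟩) →
      j = i + 1 ∧ 3 ≤ i ∧ i + 1 ≤ n - 1 := by
    rintro ⟨pos, ⟨hpos1, hpos2⟩, hiff⟩
    have h32 : ((Equiv.swap (⟨i - 2, by omega⟩ : Fin n) ⟨j - 1, by omega⟩)
          ⟨pos - 1 + 3, by omega⟩).val <
        ((Equiv.swap (⟨i - 2, by omega⟩ : Fin n) ⟨j - 1, by omega⟩)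
          ⟨pos - 1 + 2, by omega⟩).val :=
      (hiff (3 : Fin 5) (2 : Fin 5)).mp (by decide)
    have h21 : ((Equiv.swap (⟨i - 2, by omega⟩ : Fin n) ⟨j - 1, by omega⟩)
          ⟨pos - 1 + 2, by omega⟩).val <
        ((Equiv.swap (⟨i - 2, by omega⟩ : Fin n) ⟨j - 1, by omega⟩)
          ⟨pos - 1 + 1, by omega⟩).val :=
      (hiff (2 : Fin 5) (1 : Fin 5)).mp (by decide)
    have c1 := swap_cases_aux (n := n) (i - 2) (j - 1) (pos - 1 + 1) (by omega) (by omega) (by omega)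
    have c2 := swap_cases_aux (n := n) (i - 2) (j - 1) (pos - 1 + 2) (by omega) (by omega) (by omega)
    have c3 := swap_cases_aux (n := n) (i - 2) (j - 1) (pos - 1 + 3) (by omega) (by omega) (by omega)
    omega
  exact ⟨⟨fwd, fun h => ⟨i - 2, key h⟩⟩, key⟩
end

section
/- Let n ≥ 5 and let i be an integer with 2 ≤ i ≤ n-3, and set z = (i-1, i+2)(i+1, i+3) ∈ S_n. Then z consecutively contains none of the patterns 2143, 14325, 1462537; and z consecutively contains the pattern 1536247 if and only if 2 < i < n-3, in which case 1536247 consecutively appears in z at position i-2. Consequently, z consecutively contains one of the patterns 2143, 14325, 1536247, 1462537 if and only if 2 < i < n-3. -/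
set_option maxHeartbeats 1000000 in
theorem stmt1 (n i : ℕ) (hn : 5 ≤ n) (hi : 2 ≤ i) (hi' : i ≤ n - 3)
    (z : Equiv.Perm (Fin n))
    (hz : z = Equiv.swap ⟨i - 2, by omega⟩ ⟨i + 1, by omega⟩ *
              Equiv.swap ⟨i, by omega⟩ ⟨i + 2, by omega⟩) :
    ¬ consecContains p2143 z ∧ ¬ consecContains p14325 z ∧ ¬ consecContains p1462537 z ∧
    (consecContains p1536247 z ↔ 2 < i ∧ i < n - 3) ∧
    (2 < i ∧ i < n - 3 → consecAppearsAt p1536247 z (i - 2)) ∧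
    ((consecContains p2143 z ∨ consecContains p14325 z ∨
        consecContains p1536247 z ∨ consecContains p1462537 z) ↔ 2 < i ∧ i < n - 3) := by
  have hi3 : i + 3 ≤ n := by omega
  have hv : ∀ x : Fin n, (z x).val = if x.val + 2 = i then i + 1 else if x.val = i then i + 2
      else if x.val = i + 1 then i - 2 else if x.val = i + 2 then i else x.val := by
    intro x
    subst hz
    simp only [Equiv.Perm.mul_apply, Equiv.swap_apply_def, Fin.ext_iff, Fin.val_mk,
      apply_ite Fin.val]
    split_ifs <;> omega
  have hg : ∀ (x : ℕ) (hx : x < n),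
      (x + 2 = i ∧ (z ⟨x, hx⟩).val = i + 1) ∨ (x = i ∧ (z ⟨x, hx⟩).val = i + 2) ∨
      (x = i + 1 ∧ (z ⟨x, hx⟩).val + 2 = i) ∨ (x = i + 2 ∧ (z ⟨x, hx⟩).val = i) ∨
      (x + 2 ≠ i ∧ x ≠ i ∧ x ≠ i + 1 ∧ x ≠ i + 2 ∧ (z ⟨x, hx⟩).val = x) := by
    intro x hx
    have h := hv ⟨x, hx⟩
    simp only [Fin.val_mk] at h
    split_ifs at h <;> omega
  have nc2143 : ¬ consecContains p2143 z := by
    rintro ⟨s, ⟨hs1, hs2⟩, p2143H⟩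
    have pf0 : s - 1 + 0 < n := by omega
    have pf1 : s - 1 + 1 < n := by omega
    have pf2 : s - 1 + 2 < n := by omega
    have pf3 : s - 1 + 3 < n := by omega
    have G0 := hg (s - 1 + 0) pf0
    have G1 := hg (s - 1 + 1) pf1
    have G2 := hg (s - 1 + 2) pf2
    have G3 := hg (s - 1 + 3) pf3
    have h02 : (z ⟨s - 1 + 0, pf0⟩).val < (z ⟨s - 1 + 2, pf2⟩).val := (p2143H 0 2).mp (by decide)
    have h03 : (z ⟨s - 1 + 0, pf0⟩).val < (z ⟨s - 1 + 3, pf3⟩).val := (p2143H 0 3).mp (by decide)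
    have h10 : (z ⟨s - 1 + 1, pf1⟩).val < (z ⟨s - 1 + 0, pf0⟩).val := (p2143H 1 0).mp (by decide)
    have h12 : (z ⟨s - 1 + 1, pf1⟩).val < (z ⟨s - 1 + 2, pf2⟩).val := (p2143H 1 2).mp (by decide)
    have h13 : (z ⟨s - 1 + 1, pf1⟩).val < (z ⟨s - 1 + 3, pf3⟩).val := (p2143H 1 3).mp (by decide)
    have h32 : (z ⟨s - 1 + 3, pf3⟩).val < (z ⟨s - 1 + 2, pf2⟩).val := (p2143H 3 2).mp (by decide)
    omega
  have nc14325 : ¬ consecContains p14325 z := by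
    rintro ⟨s, ⟨hs1, hs2⟩, p14325H⟩
    have pf0 : s - 1 + 0 < n := by omega
    have pf1 : s - 1 + 1 < n := by omega
    have pf2 : s - 1 + 2 < n := by omega
    have pf3 : s - 1 + 3 < n := by omega
    have pf4 : s - 1 + 4 < n := by omega
    have G0 := hg (s - 1 + 0) pf0
    have G1 := hg (s - 1 + 1) pf1
    have G2 := hg (s - 1 + 2) pf2
    have G3 := hg (s - 1 + 3) pf3
    have G4 := hg (s - 1 + 4) pf4
    have h01 : (z ⟨s - 1 + 0, pf0⟩).val < (z ⟨s - 1 + 1, pf1⟩).val := (p14325H 0 1).mp (by decide)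
    have h02 : (z ⟨s - 1 + 0, pf0⟩).val < (z ⟨s - 1 + 2, pf2⟩).val := (p14325H 0 2).mp (by decide)
    have h03 : (z ⟨s - 1 + 0, pf0⟩).val < (z ⟨s - 1 + 3, pf3⟩).val := (p14325H 0 3).mp (by decide)
    have h04 : (z ⟨s - 1 + 0, pf0⟩).val < (z ⟨s - 1 + 4, pf4⟩).val := (p14325H 0 4).mp (by decide)
    have h14 : (z ⟨s - 1 + 1, pf1⟩).val < (z ⟨s - 1 + 4, pf4⟩).val := (p14325H 1 4).mp (by decide)
    have h21 : (z ⟨s - 1 + 2, pf2⟩).val < (z ⟨s - 1 + 1, pf1⟩).val := (p14325H 2 1).mp (by decide)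
    have h24 : (z ⟨s - 1 + 2, pf2⟩).val < (z ⟨s - 1 + 4, pf4⟩).val := (p14325H 2 4).mp (by decide)
    have h31 : (z ⟨s - 1 + 3, pf3⟩).val < (z ⟨s - 1 + 1, pf1⟩).val := (p14325H 3 1).mp (by decide)
    have h32 : (z ⟨s - 1 + 3, pf3⟩).val < (z ⟨s - 1 + 2, pf2⟩).val := (p14325H 3 2).mp (by decide)
    have h34 : (z ⟨s - 1 + 3, pf3⟩).val < (z ⟨s - 1 + 4, pf4⟩).val := (p14325H 3 4).mp (by decide)
    omega
  have nc1462537 : ¬ consecContains p1462537 z := by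
    rintro ⟨s, ⟨hs1, hs2⟩, p1462537H⟩
    have pf0 : s - 1 + 0 < n := by omega
    have pf1 : s - 1 + 1 < n := by omega
    have pf2 : s - 1 + 2 < n := by omega
    have pf3 : s - 1 + 3 < n := by omega
    have pf4 : s - 1 + 4 < n := by omega
    have pf5 : s - 1 + 5 < n := by omega
    have pf6 : s - 1 + 6 < n := by omega
    have G0 := hg (s - 1 + 0) pf0
    have G1 := hg (s - 1 + 1) pf1
    have G2 := hg (s - 1 + 2) pf2
    have G3 := hg (s - 1 + 3) pf3
    have G4 := hg (s - 1 + 4) pf4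
    have G5 := hg (s - 1 + 5) pf5
    have G6 := hg (s - 1 + 6) pf6
    have h01 : (z ⟨s - 1 + 0, pf0⟩).val < (z ⟨s - 1 + 1, pf1⟩).val := (p1462537H 0 1).mp (by decide)
    have h02 : (z ⟨s - 1 + 0, pf0⟩).val < (z ⟨s - 1 + 2, pf2⟩).val := (p1462537H 0 2).mp (by decide)
    have h03 : (z ⟨s - 1 + 0, pf0⟩).val < (z ⟨s - 1 + 3, pf3⟩).val := (p1462537H 0 3).mp (by decide)
    have h04 : (z ⟨s - 1 + 0, pf0⟩).val < (z ⟨s - 1 + 4, pf4⟩).val := (p1462537H 0 4).mp (by decide)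
    have h05 : (z ⟨s - 1 + 0, pf0⟩).val < (z ⟨s - 1 + 5, pf5⟩).val := (p1462537H 0 5).mp (by decide)
    have h06 : (z ⟨s - 1 + 0, pf0⟩).val < (z ⟨s - 1 + 6, pf6⟩).val := (p1462537H 0 6).mp (by decide)
    have h12 : (z ⟨s - 1 + 1, pf1⟩).val < (z ⟨s - 1 + 2, pf2⟩).val := (p1462537H 1 2).mp (by decide)
    have h14 : (z ⟨s - 1 + 1, pf1⟩).val < (z ⟨s - 1 + 4, pf4⟩).val := (p1462537H 1 4).mp (by decide)
    have h16 : (z ⟨s - 1 + 1, pf1⟩).val < (z ⟨s - 1 + 6, pf6⟩).val := (p1462537H 1 6).mp (by decide)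
    have h26 : (z ⟨s - 1 + 2, pf2⟩).val < (z ⟨s - 1 + 6, pf6⟩).val := (p1462537H 2 6).mp (by decide)
    have h31 : (z ⟨s - 1 + 3, pf3⟩).val < (z ⟨s - 1 + 1, pf1⟩).val := (p1462537H 3 1).mp (by decide)
    have h32 : (z ⟨s - 1 + 3, pf3⟩).val < (z ⟨s - 1 + 2, pf2⟩).val := (p1462537H 3 2).mp (by decide)
    have h34 : (z ⟨s - 1 + 3, pf3⟩).val < (z ⟨s - 1 + 4, pf4⟩).val := (p1462537H 3 4).mp (by decide)
    have h35 : (z ⟨s - 1 + 3, pf3⟩).val < (z ⟨s - 1 + 5, pf5⟩).val := (p1462537H 3 5).mp (by decide)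
    have h36 : (z ⟨s - 1 + 3, pf3⟩).val < (z ⟨s - 1 + 6, pf6⟩).val := (p1462537H 3 6).mp (by decide)
    have h42 : (z ⟨s - 1 + 4, pf4⟩).val < (z ⟨s - 1 + 2, pf2⟩).val := (p1462537H 4 2).mp (by decide)
    have h46 : (z ⟨s - 1 + 4, pf4⟩).val < (z ⟨s - 1 + 6, pf6⟩).val := (p1462537H 4 6).mp (by decide)
    have h51 : (z ⟨s - 1 + 5, pf5⟩).val < (z ⟨s - 1 + 1, pf1⟩).val := (p1462537H 5 1).mp (by decide)
    have h52 : (z ⟨s - 1 + 5, pf5⟩).val < (z ⟨s - 1 + 2, pf2⟩).val := (p1462537H 5 2).mp (by decide)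
    have h54 : (z ⟨s - 1 + 5, pf5⟩).val < (z ⟨s - 1 + 4, pf4⟩).val := (p1462537H 5 4).mp (by decide)
    have h56 : (z ⟨s - 1 + 5, pf5⟩).val < (z ⟨s - 1 + 6, pf6⟩).val := (p1462537H 5 6).mp (by decide)
    omega
  have fwd : ∀ s, consecAppearsAt p1536247 z s → 2 < i ∧ i < n - 3 := by
    rintro s ⟨⟨hs1, hs2⟩, p1536247H⟩
    have pf0 : s - 1 + 0 < n := by omega
    have pf1 : s - 1 + 1 < n := by omega
    have pf2 : s - 1 + 2 < n := by omega
    have pf3 : s - 1 + 3 < n := by omega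
    have pf4 : s - 1 + 4 < n := by omega
    have pf5 : s - 1 + 5 < n := by omega
    have pf6 : s - 1 + 6 < n := by omega
    have G0 := hg (s - 1 + 0) pf0
    have G1 := hg (s - 1 + 1) pf1
    have G2 := hg (s - 1 + 2) pf2
    have G3 := hg (s - 1 + 3) pf3
    have G4 := hg (s - 1 + 4) pf4
    have G5 := hg (s - 1 + 5) pf5
    have G6 := hg (s - 1 + 6) pf6
    have h01 : (z ⟨s - 1 + 0, pf0⟩).val < (z ⟨s - 1 + 1, pf1⟩).val := (p1536247H 0 1).mp (by decide)
    have h02 : (z ⟨s - 1 + 0, pf0⟩).val < (z ⟨s - 1 + 2, pf2⟩).val := (p1536247H 0 2).mp (by decide)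
    have h03 : (z ⟨s - 1 + 0, pf0⟩).val < (z ⟨s - 1 + 3, pf3⟩).val := (p1536247H 0 3).mp (by decide)
    have h04 : (z ⟨s - 1 + 0, pf0⟩).val < (z ⟨s - 1 + 4, pf4⟩).val := (p1536247H 0 4).mp (by decide)
    have h05 : (z ⟨s - 1 + 0, pf0⟩).val < (z ⟨s - 1 + 5, pf5⟩).val := (p1536247H 0 5).mp (by decide)
    have h06 : (z ⟨s - 1 + 0, pf0⟩).val < (z ⟨s - 1 + 6, pf6⟩).val := (p1536247H 0 6).mp (by decide)
    have h13 : (z ⟨s - 1 + 1, pf1⟩).val < (z ⟨s - 1 + 3, pf3⟩).val := (p1536247H 1 3).mp (by decide)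
    have h16 : (z ⟨s - 1 + 1, pf1⟩).val < (z ⟨s - 1 + 6, pf6⟩).val := (p1536247H 1 6).mp (by decide)
    have h21 : (z ⟨s - 1 + 2, pf2⟩).val < (z ⟨s - 1 + 1, pf1⟩).val := (p1536247H 2 1).mp (by decide)
    have h23 : (z ⟨s - 1 + 2, pf2⟩).val < (z ⟨s - 1 + 3, pf3⟩).val := (p1536247H 2 3).mp (by decide)
    have h25 : (z ⟨s - 1 + 2, pf2⟩).val < (z ⟨s - 1 + 5, pf5⟩).val := (p1536247H 2 5).mp (by decide)
    have h26 : (z ⟨s - 1 + 2, pf2⟩).val < (z ⟨s - 1 + 6, pf6⟩).val := (p1536247H 2 6).mp (by decide)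
    have h36 : (z ⟨s - 1 + 3, pf3⟩).val < (z ⟨s - 1 + 6, pf6⟩).val := (p1536247H 3 6).mp (by decide)
    have h41 : (z ⟨s - 1 + 4, pf4⟩).val < (z ⟨s - 1 + 1, pf1⟩).val := (p1536247H 4 1).mp (by decide)
    have h42 : (z ⟨s - 1 + 4, pf4⟩).val < (z ⟨s - 1 + 2, pf2⟩).val := (p1536247H 4 2).mp (by decide)
    have h43 : (z ⟨s - 1 + 4, pf4⟩).val < (z ⟨s - 1 + 3, pf3⟩).val := (p1536247H 4 3).mp (by decide)
    have h45 : (z ⟨s - 1 + 4, pf4⟩).val < (z ⟨s - 1 + 5, pf5⟩).val := (p1536247H 4 5).mp (by decide)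
    have h46 : (z ⟨s - 1 + 4, pf4⟩).val < (z ⟨s - 1 + 6, pf6⟩).val := (p1536247H 4 6).mp (by decide)
    have h51 : (z ⟨s - 1 + 5, pf5⟩).val < (z ⟨s - 1 + 1, pf1⟩).val := (p1536247H 5 1).mp (by decide)
    have h53 : (z ⟨s - 1 + 5, pf5⟩).val < (z ⟨s - 1 + 3, pf3⟩).val := (p1536247H 5 3).mp (by decide)
    have h56 : (z ⟨s - 1 + 5, pf5⟩).val < (z ⟨s - 1 + 6, pf6⟩).val := (p1536247H 5 6).mp (by decide)
    omega

  have hp : ∀ k : Fin 7,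
      (k.val = 0 ∧ (p1536247 k).val = 0) ∨ (k.val = 1 ∧ (p1536247 k).val = 4) ∨
      (k.val = 2 ∧ (p1536247 k).val = 2) ∨ (k.val = 3 ∧ (p1536247 k).val = 5) ∨
      (k.val = 4 ∧ (p1536247 k).val = 1) ∨ (k.val = 5 ∧ (p1536247 k).val = 3) ∨
      (k.val = 6 ∧ (p1536247 k).val = 6) := by decide
  have key : ∀ x : ℕ,
      (x + 2 = i ∧ (if x + 2 = i then i + 1 else if x = i then i + 2 else if x = i + 1 then i - 2 else if x = i + 2 then i else x) = i + 1) ∨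
      (x = i ∧ (if x + 2 = i then i + 1 else if x = i then i + 2 else if x = i + 1 then i - 2 else if x = i + 2 then i else x) = i + 2) ∨
      (x = i + 1 ∧ (if x + 2 = i then i + 1 else if x = i then i + 2 else if x = i + 1 then i - 2 else if x = i + 2 then i else x) + 2 = i) ∨
      (x = i + 2 ∧ (if x + 2 = i then i + 1 else if x = i then i + 2 else if x = i + 1 then i - 2 else if x = i + 2 then i else x) = i) ∨
      (x + 2 ≠ i ∧ x ≠ i ∧ x ≠ i + 1 ∧ x ≠ i + 2 ∧ (if x + 2 = i then i + 1 else if x = i then i + 2 else if x = i + 1 then i - 2 else if x = i + 2 then i else x) = x) := by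
    intro x; split_ifs <;> omega
  have app : 2 < i ∧ i < n - 3 → consecAppearsAt p1536247 z (i - 2) := by
    rintro ⟨h2, h3⟩
    refine ⟨⟨by omega, by omega⟩, fun a b => ?_⟩
    have ha := a.isLt
    have hb := b.isLt
    have hpa := hp a
    have hpb := hp b
    simp only [Fin.lt_def, hv, Fin.val_mk]
    have k1 := key (i - 2 - 1 + a.val)
    have k2 := key (i - 2 - 1 + b.val)
    omega
  refine ⟨nc2143, nc14325, nc1462537, ⟨fun ⟨s, h⟩ => fwd s h, fun h => ⟨i - 2, app h⟩⟩,
    app, ?_⟩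
  constructor
  · rintro (h | h | ⟨s, h⟩ | h)
    · exact absurd h nc2143
    · exact absurd h nc14325
    · exact fwd s h
    · exact absurd h nc1462537
  · exact fun h => Or.inr (Or.inr (Or.inl ⟨i - 2, app h⟩))
end

section
/- Let n ≥ 6 and let i, j be integers with 2 ≤ i ≤ n-4 and i+2 < j < n, and set z = (i-1, i)(j-1, j+1) ∈ S_n. Then z consecutively contains none of the patterns 2143, 1536247, 1462537; and z consecutively contains the pattern 14325 if and only if j ≤ n-2, in which case 14325 consecutively appears in z at position j-2. Consequently, z consecutively contains one of the patterns 2143, 14325, 1536247, 1462537 if and only if j+1 ≠ n. -/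
set_option maxHeartbeats 2000000

theorem stmt2 (n i j : ℕ) (hn : 6 ≤ n) (hi : 2 ≤ i) (hi' : i ≤ n - 4)
    (hij : i + 2 < j) (hj : j < n)
    (z : Equiv.Perm (Fin n))
    (hz : z = Equiv.swap ⟨i - 2, by omega⟩ ⟨i - 1, by omega⟩ *
              Equiv.swap ⟨j - 2, by omega⟩ ⟨j, by omega⟩) :
    ¬ consecContains p2143 z ∧ ¬ consecContains p1536247 z ∧ ¬ consecContains p1462537 z ∧
    (consecContains p14325 z ↔ j ≤ n - 2) ∧
    (j ≤ n - 2 → consecAppearsAt p14325 z (j - 2)) ∧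
    ((consecContains p2143 z ∨ consecContains p14325 z ∨
        consecContains p1536247 z ∨ consecContains p1462537 z) ↔ j + 1 ≠ n) := by

  have hzval : ∀ k : Fin n, (z k).val = if k.val = i-2 then i-1 else if k.val = i-1 then i-2
      else if k.val = j-2 then j else if k.val = j then j-2 else k.val := by
    intro k
    subst hz
    simp only [Equiv.Perm.mul_apply, Equiv.swap_apply_def]
    split_ifs <;> (try rfl) <;> (simp only [Fin.ext_iff] at *) <;> omega
  have hdesc : ∀ a b : Fin n, a.val + 1 = b.val → z b < z a →
      a.val = i-2 ∨ a.val = j-2 ∨ a.val = j-1 := by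
    intro a b hab hlt
    rw [Fin.lt_def, hzval, hzval] at hlt
    split_ifs at hlt <;> omega
  have hp : ∀ a : Fin 5, (p14325 a).val = if a.val = 1 then 3 else if a.val = 3 then 1
      else a.val := by decide
  have happ : j ≤ n - 2 → consecAppearsAt p14325 z (j - 2) := by
    intro hjn
    refine ⟨⟨by omega, by omega⟩, ?_⟩
    intro a b
    have hA := a.isLt
    have hB := b.isLt
    rw [Fin.lt_def, Fin.lt_def, hzval, hzval, hp, hp]
    simp only [Fin.val_mk]
    split_ifs <;> omega
  have hn2143 : ¬ consecContains p2143 z := by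
    rintro ⟨pos, ⟨h1, h2⟩, hab⟩
    have d1 := (hab 1 0).mp (by decide)
    have d2 := (hab 3 2).mp (by decide)
    have e1 := hdesc _ _ (by simp only [Fin.val_mk]; omega) d1
    have e2 := hdesc _ _ (by simp only [Fin.val_mk]; omega) d2
    simp only [Fin.val_mk] at e1 e2
    omega
  have hn1536247 : ¬ consecContains p1536247 z := by
    rintro ⟨pos, ⟨h1, h2⟩, hab⟩
    have d1 := (hab 2 1).mp (by decide)
    have d2 := (hab 4 3).mp (by decide)
    have e1 := hdesc _ _ (by simp only [Fin.val_mk]; omega) d1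
    have e2 := hdesc _ _ (by simp only [Fin.val_mk]; omega) d2
    simp only [Fin.val_mk] at e1 e2
    omega
  have hn1462537 : ¬ consecContains p1462537 z := by
    rintro ⟨pos, ⟨h1, h2⟩, hab⟩
    have d1 := (hab 3 2).mp (by decide)
    have d2 := (hab 5 4).mp (by decide)
    have e1 := hdesc _ _ (by simp only [Fin.val_mk]; omega) d1
    have e2 := hdesc _ _ (by simp only [Fin.val_mk]; omega) d2
    simp only [Fin.val_mk] at e1 e2
    omega
  have hiff : consecContains p14325 z ↔ j ≤ n - 2 := by
    constructor
    · rintro ⟨pos, ⟨h1, h2⟩, hab⟩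
      have d1 := (hab 2 1).mp (by decide)
      have d2 := (hab 3 2).mp (by decide)
      have e1 := hdesc _ _ (by simp only [Fin.val_mk]; omega) d1
      have e2 := hdesc _ _ (by simp only [Fin.val_mk]; omega) d2
      simp only [Fin.val_mk] at e1 e2
      omega
    · intro hjn
      exact ⟨j - 2, happ hjn⟩
  refine ⟨hn2143, hn1536247, hn1462537, hiff, happ, ?_⟩
  constructor
  · rintro (h | h | h | h)
    · exact absurd h hn2143
    · have := hiff.mp h; omega
    · exact absurd h hn1536247
    · exact absurd h hn1462537
  · intro hne
    exact Or.inr (Or.inl (hiff.mpr (by omega)))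
end

section
/- Let n ≥ 5 and let i be an integer with 3 ≤ i ≤ n-2, and set z = (i-2, i+1)(i-1, i+2) ∈ S_n. Then z consecutively contains none of the patterns 2143, 14325, 1536247, 1462537. -/
/-!
Every descent of `z` lies in one of the two adjacent positions `i - 1`, `i`, whereas `2143`,
`1536247` and `1462537` have two descents two positions apart, and a consecutive occurrence
carries the descents of the pattern into `z`. The pattern `14325` has two adjacent descents,
which pins the occurrence down to the window starting at `i - 2`; there the first entry `i + 1`
of `z` exceeds the fourth entry `i - 2`, whereas in `14325` the first entry is below the fourth.
-/

open Equiv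

section ConsecAppearsAt

variable {m n : ℕ} {p : Perm (Fin m)} {x : Perm (Fin n)} {j : ℕ}

theorem apply_lt_apply_of_consecAppearsAt (h : consecAppearsAt p x j) {a b : Fin m}
    (hab : p a < p b) {c d : Fin n} (hc : c.val = j - 1 + a) (hd : d.val = j - 1 + b) :
    x c < x d := by
  obtain ⟨_, hiff⟩ := h
  convert (hiff a b).mp hab using 2 <;> exact Fin.ext ‹_›

theorem rdes_of_consecAppearsAt (h : consecAppearsAt p x j) {b : ℕ} (hb : rdes p b) :
    rdes x (j - 1 + b) := by
  obtain ⟨⟨hb₁, hb₂⟩, hlt⟩ := hb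
  obtain ⟨hj₁, hj₂⟩ := h.fst
  exact ⟨⟨by omega, by omega⟩,
    apply_lt_apply_of_consecAppearsAt h hlt rfl (by dsimp only; omega)⟩

end ConsecAppearsAt

section DescentsInAdjacentPositions

variable {m n : ℕ} {x : Perm (Fin n)} {d : ℕ}

theorem not_consecContains_of_rdes_of_rdes_add_two {p : Perm (Fin m)} {b : ℕ}
    (hp : rdes p b) (hp' : rdes p (b + 2)) (hx : ∀ c, rdes x c → c = d ∨ c = d + 1) :
    ¬ consecContains p x := by
  rintro ⟨j, hj⟩
  have h₁ := hx _ (rdes_of_consecAppearsAt hj hp)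
  have h₂ := hx _ (rdes_of_consecAppearsAt hj hp')
  omega

theorem not_consecContains_p14325 (hx : ∀ c, rdes x c → c = d ∨ c = d + 1) (c e : Fin n)
    (hc : c.val + 2 = d) (he : e.val = d + 1) (hlt : x e < x c) :
    ¬ consecContains p14325 x := by
  rintro ⟨j, hj⟩
  have h₁ := hx _ (rdes_of_consecAppearsAt hj (b := 2) ⟨by norm_num, by decide⟩)
  have h₂ := hx _ (rdes_of_consecAppearsAt hj (b := 3) ⟨by norm_num, by decide⟩)
  have hlt' := apply_lt_apply_of_consecAppearsAt hj (a := 0) (b := 3) (c := c) (d := e)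
    (by decide) (by change c.val = j - 1 + 0; omega) (by change e.val = j - 1 + 3; omega)
  exact lt_asymm hlt hlt'

end DescentsInAdjacentPositions

section DoubleSwap

variable {n : ℕ} {z : Perm (Fin n)} {a b c d : Fin n} (hz : z = swap a b * swap c d)
  (hb : b.val = a.val + 3) (hc : c.val = a.val + 1) (hd : d.val = a.val + 4)
include hz hb hc hd

theorem rdes_swap_mul_swap {k : ℕ} (hk : rdes z k) : k = a.val + 2 ∨ k = a.val + 2 + 1 := by
  obtain ⟨⟨hk₁, hk₂⟩, hlt⟩ := hk
  rw [hz, Fin.lt_def] at hlt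
  simp only [Perm.mul_apply, swap_apply_def] at hlt
  split_ifs at hlt <;> simp only [Fin.ext_iff] at * <;> omega

theorem swap_mul_swap_apply_lt_apply : z b < z a := by
  simp only [hz, Fin.lt_def, Perm.mul_apply, swap_apply_def, Fin.ext_iff]
  split_ifs <;> omega

end DoubleSwap

theorem stmt5 (n i : ℕ) (hi : 3 ≤ i) (hi' : i ≤ n - 2)
    (z : Equiv.Perm (Fin n))
    (hz : z = Equiv.swap ⟨i - 3, by omega⟩ ⟨i, by omega⟩ *
              Equiv.swap ⟨i - 2, by omega⟩ ⟨i + 1, by omega⟩) :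
    ¬ consecContains p2143 z ∧ ¬ consecContains p14325 z ∧
    ¬ consecContains p1536247 z ∧ ¬ consecContains p1462537 z := by
  have hb : i = i - 3 + 3 := by omega
  have hc : i - 2 = i - 3 + 1 := by omega
  have hd : i + 1 = i - 3 + 4 := by omega
  have hdes := fun k => rdes_swap_mul_swap (k := k) hz hb hc hd
  refine ⟨?_, ?_, ?_, ?_⟩
  · exact not_consecContains_of_rdes_of_rdes_add_two (b := 1)
      ⟨by norm_num, by decide⟩ ⟨by norm_num, by decide⟩ hdes
  · exact not_consecContains_p14325 hdes _ _ rfl hb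
      (swap_mul_swap_apply_lt_apply hz hb hc hd)
  · exact not_consecContains_of_rdes_of_rdes_add_two (b := 2)
      ⟨by norm_num, by decide⟩ ⟨by norm_num, by decide⟩ hdes
  · exact not_consecContains_of_rdes_of_rdes_add_two (b := 3)
      ⟨by norm_num, by decide⟩ ⟨by norm_num, by decide⟩ hdes
end

section
/- Let n ≥ 7 and let i, j, k be integers with 2 ≤ i ≤ n-5, i+2 < j < n and j+1 < k ≤ n, and set z = (i-1, i)(j-1, k) ∈ S_n. Then z consecutively contains none of the patterns 2143, 14325, 1536247, 1462537. -/
/-! In `0`-based positions, `z` is the restriction of the permutation `(a, a+1)(b, c)` of `ℕ`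
with `a = i - 2`, `b = j - 2`, `c = k - 1`. Its descents are exactly `a`, `b` and `c - 1`; since
`a + 3 ≤ b` and `b + 3 ≤ c`, no two are adjacent, and two lie at distance `2` only when `c = b + 3`,
namely `b` and `b + 2`. Each of the four patterns has two descents at distance `1` or `2`, and in
the latter case the one further comparison it prescribes fails at that forced position. -/

open Equiv

theorem Fin.val_swap_apply {n : ℕ} (u v t : Fin n) :
    (swap u v t : ℕ) = swap (u : ℕ) (v : ℕ) (t : ℕ) := by
  simp only [swap_apply_def, Fin.ext_iff]
  split_ifs <;> rfl

theorem consecContains.exists_offset {m n : ℕ} {p : Perm (Fin m)} {x : Perm (Fin n)}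
    {f : ℕ → ℕ} (hf : ∀ t, (x t : ℕ) = f t) (h : consecContains p x) :
    ∃ d, ∀ r s : Fin m, p r < p s → f (d + r) < f (d + s) := by
  obtain ⟨pos, _, hpos⟩ := h
  refine ⟨pos - 1, fun r s hrs => ?_⟩
  have hlt := Fin.lt_def.mp ((hpos r s).mp hrs)
  rwa [hf, hf] at hlt

def zPerm (a b c : ℕ) : Perm ℕ := swap a (a + 1) * swap b c

namespace zPerm

variable {a b c : ℕ}

theorem apply_left (hab : a + 1 < b) (hbc : b < c) : zPerm a b c b = c := by
  rw [zPerm, Perm.mul_apply, swap_apply_left, swap_apply_of_ne_of_ne] <;> omega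

theorem apply_right (hab : a + 1 < b) : zPerm a b c c = b := by
  rw [zPerm, Perm.mul_apply, swap_apply_right, swap_apply_of_ne_of_ne] <;> omega

theorem apply_eq_self {t : ℕ} (ha : t ≠ a) (ha' : t ≠ a + 1) (hb : t ≠ b) (hc : t ≠ c) :
    zPerm a b c t = t := by
  rw [zPerm, Perm.mul_apply, swap_apply_of_ne_of_ne hb hc, swap_apply_of_ne_of_ne ha ha']

theorem apply_succ_lt_iff (hab : a + 3 ≤ b) (hbc : b + 3 ≤ c) (t : ℕ) :
    zPerm a b c (t + 1) < zPerm a b c t ↔ t = a ∨ t = b ∨ t + 1 = c := by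
  simp only [zPerm, Perm.mul_apply, swap_apply_def]
  split_ifs <;> omega

theorem eq_of_descents_two_apart (hab : a + 3 ≤ b) (hbc : b + 3 ≤ c) {t : ℕ}
    (ht : zPerm a b c (t + 1) < zPerm a b c t)
    (ht' : zPerm a b c (t + 3) < zPerm a b c (t + 2)) : t = b ∧ c = b + 3 := by
  have h := (apply_succ_lt_iff hab hbc t).mp ht
  have h' := (apply_succ_lt_iff hab hbc (t + 2)).mp ht'
  omega

section Patterns

variable (hab : a + 3 ≤ b) (hbc : b + 3 ≤ c) {n : ℕ} {x : Perm (Fin n)}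
  (hx : ∀ t, (x t : ℕ) = zPerm a b c t)
include hab hbc hx

theorem not_consecContains_p2143 : ¬ consecContains p2143 x := by
  intro h
  obtain ⟨d, hd⟩ := h.exists_offset hx
  obtain ⟨rfl, rfl⟩ := eq_of_descents_two_apart hab hbc
    (by simpa using hd 1 0 (by decide)) (by simpa using hd 3 2 (by decide))
  have h03 : zPerm a d (d + 3) d < zPerm a d (d + 3) (d + 3) := by
    simpa using hd 0 3 (by decide)
  rw [apply_left (by omega) (by omega), apply_right (by omega)] at h03
  omega

theorem not_consecContains_p14325 : ¬ consecContains p14325 x := by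
  intro h
  obtain ⟨d, hd⟩ := h.exists_offset hx
  have h21 := (apply_succ_lt_iff hab hbc (d + 1)).mp (by simpa using hd 2 1 (by decide))
  have h32 := (apply_succ_lt_iff hab hbc (d + 2)).mp (by simpa using hd 3 2 (by decide))
  omega

theorem not_consecContains_p1536247 : ¬ consecContains p1536247 x := by
  intro h
  obtain ⟨d, hd⟩ := h.exists_offset hx
  obtain ⟨rfl, rfl⟩ := eq_of_descents_two_apart (t := d + 1) hab hbc
    (by simpa using hd 2 1 (by decide)) (by simpa using hd 4 3 (by decide))
  have h53 : zPerm a (d + 1) (d + 1 + 3) (d + 5) < zPerm a (d + 1) (d + 1 + 3) (d + 3) := by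
    simpa using hd 5 3 (by decide)
  rw [apply_eq_self, apply_eq_self] at h53 <;> omega

theorem not_consecContains_p1462537 : ¬ consecContains p1462537 x := by
  intro h
  obtain ⟨d, hd⟩ := h.exists_offset hx
  obtain ⟨rfl, rfl⟩ := eq_of_descents_two_apart (t := d + 2) hab hbc
    (by simpa using hd 3 2 (by decide)) (by simpa using hd 5 4 (by decide))
  have h31 : zPerm a (d + 2) (d + 2 + 3) (d + 3) < zPerm a (d + 2) (d + 2 + 3) (d + 1) := by
    simpa using hd 3 1 (by decide)
  rw [apply_eq_self, apply_eq_self] at h31 <;> omega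

end Patterns

end zPerm

theorem stmt7 (n i j k : ℕ) (hi : 2 ≤ i)
    (hij : i + 2 < j) (hjk : j + 1 < k) (hk : k ≤ n)
    (z : Equiv.Perm (Fin n))
    (hz : z = Equiv.swap ⟨i - 2, by omega⟩ ⟨i - 1, by omega⟩ *
              Equiv.swap ⟨j - 2, by omega⟩ ⟨k - 1, by omega⟩) :
    ¬ consecContains p2143 z ∧ ¬ consecContains p14325 z ∧
    ¬ consecContains p1536247 z ∧ ¬ consecContains p1462537 z := by
  have hval : ∀ t, (z t : ℕ) = zPerm (i - 2) (j - 2) (k - 1) t := by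
    intro t
    rw [hz, zPerm, show i - 2 + 1 = i - 1 by omega, Perm.mul_apply, Perm.mul_apply,
      Fin.val_swap_apply, Fin.val_swap_apply]
  have hab : i - 2 + 3 ≤ j - 2 := by omega
  have hbc : j - 2 + 3 ≤ k - 1 := by omega
  exact ⟨zPerm.not_consecContains_p2143 hab hbc hval, zPerm.not_consecContains_p14325 hab hbc hval,
    zPerm.not_consecContains_p1536247 hab hbc hval, zPerm.not_consecContains_p1462537 hab hbc hval⟩
end
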